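/- arXiv:1102.2035 — 2 statements merged into one kernel-verified Lean document; each statement's English description precedes it below -/
import Mathlib

section
/- Let n ≥ 3 and let k₊, k₋ be integers with 0 < k₋ < k₊. Suppose there exists a subgroup Λ ⊆ ℤⁿ that is a lattice tiling of ℤⁿ by (k₊, k₋, n)-quasi-crosses and that 2k₋ > n - 2. Then 8·k₊ ≤ 3n² if n is even, and 4·k₊ ≤ 3n² - 4n + 1 if n is odd. -/
/-!
Place the staircase `S = [0, k₊] × [0, k₋] ∪ [0, k₋] × (k₋, k₊]` of `ℤ²` on two coordinate axes of
`ℤⁿ`. Up to sign, the difference of two points of `S` is `d eᵢ + e eⱼ` with `-k₋ ≤ d ≤ k₊` and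
`-k₊ ≤ e ≤ k₋`; such a vector lies in `Λ` only if it is zero, since otherwise
`d eᵢ = (d eᵢ + e eⱼ) + (-e) eⱼ` and `d eᵢ = 0 + d eᵢ` would be two different decompositions.
So the points of `S` lie in distinct cosets of `Λ`, while every coset meets the quasi-cross:
`(k₋ + 1)(2k₊ - k₋ + 1) ≤ 1 + n(k₊ + k₋)`. Since `2k₋ > n - 2`, this bounds `k₊`.
-/

/-- The `(k₊, k₋, n)`-quasi-cross: the zero vector together with all vectors `m • eᵢ`
with `-k₋ ≤ m ≤ k₊`, `m ≠ 0`. -/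
def quasiCross (kp km : ℤ) (n : ℕ) : Set (Fin n → ℤ) :=
  {x | x = 0 ∨ ∃ i : Fin n, ∃ m : ℤ, -km ≤ m ∧ m ≤ kp ∧ m ≠ 0 ∧ x = Pi.single i m}

/-- `Λ` is a lattice tiling of `ℤⁿ` by `(k₊, k₋, n)`-quasi-crosses: every `z ∈ ℤⁿ` has a
unique representation `z = v + e` with `v ∈ Λ` and `e` in the quasi-cross. -/
def IsLatticeTiling {n : ℕ} (Λ : AddSubgroup (Fin n → ℤ)) (kp km : ℤ) : Prop :=
  ∀ z : Fin n → ℤ, ∃! ve : (Fin n → ℤ) × (Fin n → ℤ),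
    ve.1 ∈ Λ ∧ ve.2 ∈ quasiCross kp km n ∧ z = ve.1 + ve.2

open Finset

section QuasiCross

variable {n : ℕ} {kp km : ℤ}

theorem single_mem_quasiCross (i : Fin n) {m : ℤ} (h₁ : -km ≤ m) (h₂ : m ≤ kp) :
    Pi.single i m ∈ quasiCross kp km n := by
  rcases eq_or_ne m 0 with rfl | hm
  · exact Or.inl (Pi.single_zero i)
  · exact Or.inr ⟨i, m, h₁, h₂, hm, rfl⟩

noncomputable def quasiCrossFinset (kp km : ℤ) (n : ℕ) : Finset (Fin n → ℤ) :=
  insert 0 ((univ ×ˢ (Icc (-km) kp).erase 0).image fun q => Pi.single q.1 q.2)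

theorem quasiCross_subset_quasiCrossFinset :
    quasiCross kp km n ⊆ quasiCrossFinset kp km n := by
  rintro x (rfl | ⟨i, m, h₁, h₂, hm, rfl⟩)
  · exact mem_insert_self _ _
  · exact mem_insert_of_mem (mem_image.2 ⟨(i, m), by simp [hm, h₁, h₂], rfl⟩)

theorem card_quasiCrossFinset_le (hkp : 0 ≤ kp) (hkm : 0 ≤ km) :
    (#(quasiCrossFinset kp km n) : ℤ) ≤ 1 + n * (kp + km) := by
  have harm : (#((Icc (-km) kp).erase 0) : ℤ) = kp + km := by
    rw [card_erase_of_mem (by simp [hkp, hkm]), Int.card_Icc, Nat.cast_sub (by omega)]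
    omega
  have hcard : #(quasiCrossFinset kp km n) ≤ n * #((Icc (-km) kp).erase 0) + 1 := by
    refine (card_insert_le _ _).trans (Nat.add_le_add_right (card_image_le.trans ?_) 1)
    rw [card_product, card_univ, Fintype.card_fin]
  calc (#(quasiCrossFinset kp km n) : ℤ) ≤ n * #((Icc (-km) kp).erase 0) + 1 := mod_cast hcard
    _ = 1 + n * (kp + km) := by rw [harm, add_comm]

end QuasiCross

namespace IsLatticeTiling

variable {n : ℕ} {Λ : AddSubgroup (Fin n → ℤ)} {kp km : ℤ}

theorem eq_zero_of_add_mem_quasiCross (hΛ : IsLatticeTiling Λ kp km) {v e : Fin n → ℤ}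
    (hv : v ∈ Λ) (he : e ∈ quasiCross kp km n) (hve : v + e ∈ quasiCross kp km n) : v = 0 :=
  congrArg Prod.fst <| (hΛ (v + e)).unique (y₁ := (v, e)) (y₂ := (0, v + e))
    ⟨hv, he, rfl⟩ ⟨Λ.zero_mem, hve, (zero_add _).symm⟩

theorem eq_zero_of_single_add_single_mem (hΛ : IsLatticeTiling Λ kp km) {i j : Fin n}
    (hij : i ≠ j) {x : ℤ × ℤ} (hx : x ∈ Set.Icc (-km) kp ×ˢ Set.Icc (-kp) km)
    (hmem : Pi.single i x.1 + Pi.single j x.2 ∈ Λ) : x = 0 := by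
  obtain ⟨⟨hd₁, hd₂⟩, he₁, he₂⟩ := hx
  have hzero := hΛ.eq_zero_of_add_mem_quasiCross hmem
    (single_mem_quasiCross j (m := -x.2) (by omega) (by omega)) (by
      rw [Pi.single_neg, add_neg_cancel_right]
      exact single_mem_quasiCross i hd₁ hd₂)
  have h₁ := congrFun hzero i
  have h₂ := congrFun hzero j
  simp only [Pi.add_apply, Pi.single_eq_same, Pi.single_eq_of_ne hij,
    Pi.single_eq_of_ne hij.symm, Pi.zero_apply, add_zero, zero_add] at h₁ h₂
  exact Prod.ext h₁ h₂

theorem card_le_card_of_injOn_mod (hΛ : IsLatticeTiling Λ kp km) {T : Finset (Fin n → ℤ)}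
    (hT : quasiCross kp km n ⊆ T) {ι : Type*} (f : ι → Fin n → ℤ) {A : Finset ι}
    (hA : ∀ p ∈ A, ∀ q ∈ A, f p - f q ∈ Λ → p = q) : #A ≤ #T := by
  choose ve hve using fun p => (hΛ (f p)).exists
  refine card_le_card_of_injOn (fun p => (ve p).2) (fun p _ => hT (hve p).2.1) ?_
  intro p hp q hq (hpq : (ve p).2 = (ve q).2)
  refine hA p hp q hq ?_
  have hdiff : f p - f q = (ve p).1 - (ve q).1 := by
    rw [(hve p).2.2, (hve q).2.2, hpq]
    abel
  exact hdiff ▸ Λ.sub_mem (hve p).1 (hve q).1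

end IsLatticeTiling

section Staircase

variable {kp km : ℤ}

noncomputable def staircase (kp km : ℤ) : Finset (ℤ × ℤ) :=
  Icc 0 kp ×ˢ Icc 0 km ∪ Icc 0 km ×ˢ Icc (km + 1) kp

theorem card_staircase (hkm : 0 ≤ km) (hlt : km ≤ kp) :
    (#(staircase kp km) : ℤ) = (km + 1) * (2 * kp - km + 1) := by
  have hdisj : Disjoint (Icc 0 kp ×ˢ Icc 0 km) (Icc 0 km ×ˢ Icc (km + 1) kp) :=
    disjoint_left.2 fun x hx hx' => by simp only [mem_product, mem_Icc] at hx hx'; omega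
  rw [staircase, card_union_of_disjoint hdisj, card_product, card_product]
  simp only [Int.card_Icc, Nat.cast_add, Nat.cast_mul]
  rw [Int.toNat_of_nonneg (by omega), Int.toNat_of_nonneg (by omega),
    Int.toNat_of_nonneg (by omega)]
  ring

theorem staircase_sub_mem_box {p q : ℤ × ℤ} (hp : p ∈ staircase kp km)
    (hq : q ∈ staircase kp km) :
    p - q ∈ Set.Icc (-km) kp ×ˢ Set.Icc (-kp) km ∨
      q - p ∈ Set.Icc (-km) kp ×ˢ Set.Icc (-kp) km := by
  simp only [staircase, mem_union, mem_product, mem_Icc] at hp hq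
  simp only [Set.mem_prod, Set.mem_Icc, Prod.fst_sub, Prod.snd_sub]
  omega

end Staircase

theorem IsLatticeTiling.card_staircase_le {n : ℕ} {Λ : AddSubgroup (Fin n → ℤ)} {kp km : ℤ}
    (hΛ : IsLatticeTiling Λ kp km) {i j : Fin n} (hij : i ≠ j) (hkm : 0 ≤ km) (hlt : km ≤ kp) :
    (km + 1) * (2 * kp - km + 1) ≤ 1 + n * (kp + km) := by
  set f : ℤ × ℤ → Fin n → ℤ := fun p => Pi.single i p.1 + Pi.single j p.2
  have hf : ∀ p q, f p - f q = Pi.single i (p - q).1 + Pi.single j (p - q).2 := by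
    intro p q
    simp only [f, Prod.fst_sub, Prod.snd_sub, Pi.single_sub]
    abel
  have hinj : ∀ p ∈ staircase kp km, ∀ q ∈ staircase kp km, f p - f q ∈ Λ → p = q := by
    intro p hp q hq hmem
    rcases staircase_sub_mem_box hp hq with hbox | hbox
    · exact sub_eq_zero.1 (hΛ.eq_zero_of_single_add_single_mem hij hbox (hf p q ▸ hmem))
    · refine (sub_eq_zero.1 (hΛ.eq_zero_of_single_add_single_mem hij hbox ?_)).symm
      rw [← hf, ← neg_sub]
      exact Λ.neg_mem hmem
  rw [← card_staircase hkm hlt]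
  have hcard := hΛ.card_le_card_of_injOn_mod quasiCross_subset_quasiCrossFinset f hinj
  exact (Nat.cast_le.2 hcard).trans (card_quasiCrossFinset_le (hkm.trans hlt) hkm)

theorem kp_le_of_staircase_ineq {n : ℕ} {kp km : ℤ} (hlt : km < kp)
    (hbig : 2 * km > (n : ℤ) - 2) (h : (km + 1) * (2 * kp - km + 1) ≤ 1 + n * (kp + km)) :
    (Even n → 8 * kp ≤ 3 * (n : ℤ) ^ 2) ∧ (Odd n → 4 * kp ≤ 3 * (n : ℤ) ^ 2 - 4 * n + 1) := by
  -- `h` says `kp * (2 * km + 2 - n) ≤ km * (km + n)`, and `2 * km + 2 - n` is at least 2 for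
  -- even `n` and at least 1 for odd `n`.
  have hY : 0 ≤ kp - 1 - km := by omega
  constructor
  · rintro ⟨t, ht⟩
    have hX : 0 ≤ 2 * km - n := by omega
    by_contra! hcon
    have hZ : 0 ≤ 2 * kp - 3 * (n : ℤ) + 2 := by nlinarith
    nlinarith [mul_nonneg hX hY, mul_nonneg hX hZ]
  · intro _
    have hX : 0 ≤ 2 * km - n + 1 := by omega
    by_contra! hcon
    have hZ : 0 ≤ 2 * kp - 3 * (n : ℤ) + 3 := by nlinarith
    nlinarith [mul_nonneg hX hY, mul_nonneg hX hZ]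

theorem stmt7 (n : ℕ) (hn : 3 ≤ n) (kp km : ℤ) (h0 : 0 < km) (hlt : km < kp)
    (h : ∃ Λ : AddSubgroup (Fin n → ℤ), IsLatticeTiling Λ kp km)
    (hbig : 2 * km > (n : ℤ) - 2) :
    (Even n → 8 * kp ≤ 3 * (n : ℤ) ^ 2) ∧
    (Odd n → 4 * kp ≤ 3 * (n : ℤ) ^ 2 - 4 * n + 1) := by
  obtain ⟨Λ, hΛ⟩ := h
  have hij : (⟨0, by omega⟩ : Fin n) ≠ ⟨1, by omega⟩ := by simp
  exact kp_le_of_staircase_ineq hlt hbig (hΛ.card_staircase_le hij h0.le hlt.le)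
end

section
/- Let k ≥ 2 and q > 1 be integers and let M = [-(k-1), k]* = {m ∈ ℤ : -(k-1) ≤ m ≤ k, m ≠ 0}. Then there is no non-singular splitting of ℤ/qℤ by M; i.e., there is no set S ⊆ ℤ/qℤ such that M and S split ℤ/qℤ and gcd(q, m) = 1 for all m ∈ M. -/
/-- `M` and `S` split the additive abelian group `G`: the map `(m, s) ↦ m • s`
is a bijection from `M × S` onto `G \ {0}`. -/
def Splits {G : Type*} [AddCommGroup G] (M : Set ℤ) (S : Set G) : Prop :=
  Set.BijOn (fun p : ℤ × G => p.1 • p.2) (M ×ˢ S) {g : G | g ≠ 0}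

/-!
Fix `s ∈ S`. Since `k` is invertible mod `q`, `-(k • s) ≠ 0`, so `-(k • s) = m • s'` with
`m ∈ M`. If `m ≠ k` then `-m ∈ M` and `(-m) • s' = k • s`, forcing `-m = k`, which is impossible
as `-k ∉ M`. Hence `k • s' = k • (-s)`, i.e. `-s = s' ∈ S`. But then `1 • s = (-1) • (-s)` writes
the same element twice.
-/

namespace Splits

variable {G : Type*} [AddCommGroup G] {M : Set ℤ} {S : Set G}

theorem smul_ne_zero (h : Splits M S) {m : ℤ} {s : G} (hm : m ∈ M) (hs : s ∈ S) : m • s ≠ 0 :=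
  h.mapsTo (Set.mk_mem_prod hm hs)

theorem eq_of_smul_eq (h : Splits M S) {m m' : ℤ} {s s' : G} (hm : m ∈ M) (hs : s ∈ S)
    (hm' : m' ∈ M) (hs' : s' ∈ S) (heq : m • s = m' • s') : m = m' ∧ s = s' :=
  Prod.ext_iff.mp (h.injOn (Set.mk_mem_prod hm hs) (Set.mk_mem_prod hm' hs') heq)

theorem nonempty [Nontrivial G] (h : Splits M S) : S.Nonempty := by
  obtain ⟨g, hg⟩ := exists_ne (0 : G)
  obtain ⟨⟨_, s⟩, ⟨_, hs⟩, _⟩ := h.surjOn hg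
  exact ⟨s, hs⟩

theorem neg_notMem (h : Splits M S) (h1 : 1 ∈ M) (hneg1 : -1 ∈ M) {s : G} (hs : s ∈ S) :
    -s ∉ S := fun hns =>
  absurd (h.eq_of_smul_eq h1 hs hneg1 hns (by simp)).1 (by decide)

theorem neg_mem (h : Splits M S) {k : ℤ} (hk : k ∈ M) (hnk : -k ∉ M)
    (hsymm : ∀ m ∈ M, m ≠ k → -m ∈ M) (hinj : Function.Injective (k • · : G → G))
    {s : G} (hs : s ∈ S) : -s ∈ S := by
  have hks : -(k • s) ≠ 0 := neg_ne_zero.mpr (h.smul_ne_zero hk hs)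
  obtain ⟨⟨m, s'⟩, ⟨hm, hs'⟩, heq : m • s' = -(k • s)⟩ := h.surjOn hks
  obtain rfl : m = k := by
    by_contra hmk
    have hnegm : (-m) • s' = k • s := by rw [neg_zsmul, heq, neg_neg]
    obtain rfl : -m = k := (h.eq_of_smul_eq (hsymm m hm hmk) hs' hk hs hnegm).1
    exact hnk (by simpa using hm)
  obtain rfl : s' = -s := hinj (by simpa using heq)
  exact hs'

end Splits

theorem ZMod.zsmul_injective_of_gcd_eq_one {q : ℕ} {k : ℤ} (h : Int.gcd q k = 1) :
    Function.Injective (k • · : ZMod q → ZMod q) := by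
  have hu : IsUnit (k : ZMod q) :=
    (ZMod.coe_int_isUnit_iff_isCoprime k q).mpr (Int.isCoprime_iff_gcd_eq_one.mpr h)
  intro x y hxy
  simpa only [zsmul_eq_mul, hu.mul_right_inj] using hxy

theorem stmt11 (k q : ℕ) (hk : 2 ≤ k) (hq : 1 < q) :
    ¬ ∃ S : Set (ZMod q),
      Splits {m : ℤ | -((k : ℤ) - 1) ≤ m ∧ m ≤ k ∧ m ≠ 0} S ∧
      ∀ m ∈ {m : ℤ | -((k : ℤ) - 1) ≤ m ∧ m ≤ k ∧ m ≠ 0}, Int.gcd (q : ℤ) m = 1 := by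
  have : Fact (1 < q) := ⟨hq⟩
  rintro ⟨S, hsplit, hgcd⟩
  have hkM : -((k : ℤ) - 1) ≤ k ∧ (k : ℤ) ≤ k ∧ (k : ℤ) ≠ 0 := by omega
  obtain ⟨s, hs⟩ := hsplit.nonempty
  have hsymm (m : ℤ) (hm : -((k : ℤ) - 1) ≤ m ∧ m ≤ k ∧ m ≠ 0) (hmk : m ≠ k) :
      -((k : ℤ) - 1) ≤ -m ∧ -m ≤ k ∧ -m ≠ 0 := by omega
  have hns : -s ∈ S := hsplit.neg_mem hkM (by rintro ⟨h, -⟩; omega) hsymm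
    (ZMod.zsmul_injective_of_gcd_eq_one (hgcd k hkM)) hs
  exact hsplit.neg_notMem ⟨by omega, by omega, one_ne_zero⟩ ⟨by omega, by omega, by omega⟩ hs hns
end
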